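/- arXiv:1410.8368 — 3 statements merged into one kernel-verified Lean document; each statement's English description precedes it below -/
import Mathlib

section
/- For every real α ≥ 0, every m ∈ ℕ and every integer I ≥ 0 there exists a constant C = C(α, m, I) > 0 such that for all λ ≠ 0 (the derivative being taken separately on λ > 0 and λ < 0) and all (x,t) ∈ K: |∂^I/∂λ^I φ^α_{(λ,m)}(x,t)| ≤ C · N(x,t)^{2I}. -/
open MeasureTheory Real Set Filter Topology ENNReal NNReal

noncomputable section

namespace LaguerreHypergroup

/-- The measure `dm_α(x,t) = (π Γ(α+1))⁻¹ x^{2α+1} dx dt` on `K = [0,∞) × ℝ`,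
modeled on `ℝ × ℝ` with density vanishing for `x < 0`. -/
def mAlpha (α : ℝ) : Measure (ℝ × ℝ) :=
  (volume : Measure (ℝ × ℝ)).withDensity fun z =>
    ENNReal.ofReal ((π * Real.Gamma (α + 1))⁻¹ * if 0 ≤ z.1 then z.1 ^ (2 * α + 1) else 0)

/-- The homogeneous norm `N(x,t) = (x⁴ + 4t²)^{1/4}`. -/
def hNorm (z : ℝ × ℝ) : ℝ := (z.1 ^ 4 + 4 * z.2 ^ 2) ^ ((1 : ℝ) / 4)

/-- The homogeneous dimension `Q = 2α + 4`. -/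
def Q (α : ℝ) : ℝ := 2 * α + 4

/-- The Laguerre polynomial of degree `m` and order `α`. -/
def laguerreL (α : ℝ) (m : ℕ) (x : ℝ) : ℝ :=
  ∑ k ∈ Finset.range (m + 1),
    Real.Gamma (m + α + 1) /
      (Real.Gamma (k + α + 1) * (m - k).factorial * k.factorial) * (-x) ^ k

/-- The Laguerre function `𝓛_m^α(x) = e^{-x/2} L_m^α(x) / L_m^α(0)`. -/
def laguerreFun (α : ℝ) (m : ℕ) (x : ℝ) : ℝ :=
  Real.exp (-x / 2) * laguerreL α m x / laguerreL α m 0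

/-- The character `φ^α_{(λ,m)}(x,t) = e^{iλt} 𝓛_m^α(|λ| x²)`. -/
def phi (α : ℝ) (lam : ℝ) (m : ℕ) (x t : ℝ) : ℂ :=
  Complex.exp (Complex.I * (lam : ℂ) * (t : ℂ)) * (laguerreFun α m (|lam| * x ^ 2) : ℂ)

/-- The dual quasi-norm `N(λ,m) = 4|λ|(m + (α+1)/2)`. -/
def dualN (α : ℝ) (lam : ℝ) (m : ℕ) : ℝ := 4 * |lam| * ((m : ℝ) + (α + 1) / 2)

/-- The Fourier–Laguerre transform
`f̂(λ,m) = ∫_K φ^α_{(-λ,m)}(x,t) f(x,t) dm_α(x,t)`. -/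
def fourierL (α : ℝ) (f : ℝ × ℝ → ℂ) (lam : ℝ) (m : ℕ) : ℂ :=
  ∫ z, phi α (-lam) m z.1 z.2 * f z ∂(mAlpha α)

/-- The Plancherel measure `γ_α` on `K̂`, modeled on `ℝ × ℕ`:
`∫ Φ dγ_α = Σ_m L_m^α(0) ∫_ℝ Φ(λ,m) |λ|^{α+1} dλ`. -/
def gammaM (α : ℝ) : Measure (ℝ × ℕ) :=
  Measure.sum fun m : ℕ =>
    ((volume : Measure ℝ).withDensity fun lam =>
        ENNReal.ofReal (laguerreL α m 0 * |lam| ^ (α + 1))).map fun lam => (lam, m)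

/-- A `(p,q,s)`-atom centered at the origin. -/
def IsAtom (α p : ℝ) (q : ℝ≥0∞) (s : ℕ) (a : ℝ × ℝ → ℂ) : Prop :=
  MemLp a q (mAlpha α) ∧
  ∃ r > (0 : ℝ),
    (∀ z : ℝ × ℝ, ¬ hNorm z < r → a z = 0) ∧
    eLpNorm a q (mAlpha α) ≤
      mAlpha α {z : ℝ × ℝ | hNorm z < r} ^ (1 / q.toReal - 1 / p) ∧
    ∀ i j : ℕ, i + 2 * j ≤ s →
      ∫ z : ℝ × ℝ, (z.1 : ℂ) ^ i * (z.2 : ℂ) ^ j * a z ∂(mAlpha α) = 0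

/-- `a = 1 - 1/p + ε` in the molecule definition. -/
def molA (p ε : ℝ) : ℝ := 1 - 1 / p + ε

/-- `b = 1 - 1/q + ε` in the molecule definition (`1/∞ = 0`). -/
def molB (q : ℝ≥0∞) (ε : ℝ) : ℝ := 1 - 1 / q.toReal + ε

/-- A `(p,q,s,ε)`-molecule centered at the origin. -/
def IsMolecule (α p : ℝ) (q : ℝ≥0∞) (s : ℕ) (ε : ℝ) (M : ℝ × ℝ → ℂ) : Prop :=
  MemLp M q (mAlpha α) ∧
  MemLp (fun z => (hNorm z ^ (Q α * molB q ε) : ℝ) • M z) q (mAlpha α) ∧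
  ∀ i j : ℕ, i + 2 * j ≤ s →
    Integrable (fun z : ℝ × ℝ => (z.1 : ℂ) ^ i * (z.2 : ℂ) ^ j * M z) (mAlpha α) ∧
    ∫ z : ℝ × ℝ, (z.1 : ℂ) ^ i * (z.2 : ℂ) ^ j * M z ∂(mAlpha α) = 0

/-- The molecular norm `𝔑(M)`. -/
def molNorm (α p : ℝ) (q : ℝ≥0∞) (ε : ℝ) (M : ℝ × ℝ → ℂ) : ℝ :=
  (eLpNorm M q (mAlpha α)).toReal ^ (molA p ε / molB q ε) *
    (eLpNorm (fun z => (hNorm z ^ (Q α * molB q ε) : ℝ) • M z) q (mAlpha α)).toReal ^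
      (1 - molA p ε / molB q ε)

/-- `D^I_λ â(λ,m)`: the Fourier–Laguerre transform of `(x,t) ↦ x^{i₁} t^{i₀} a(x,t)`. -/
def fourierMomentD (α : ℝ) (a : ℝ × ℝ → ℂ) (i₁ i₀ : ℕ) (lam : ℝ) (m : ℕ) : ℂ :=
  ∫ z : ℝ × ℝ, (z.1 : ℂ) ^ i₁ * (z.2 : ℂ) ^ i₀ * a z * phi α (-lam) m z.1 z.2 ∂(mAlpha α)

end LaguerreHypergroup

/-!
Near a fixed `λ ≠ 0` we have `|l| = s l` with `s = ±1`, so `φ(l) = e^{ilt} g(s x² l)`, where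
`g(u) = e^{-u/2} p(u)` for a polynomial `p`. The derivatives of such a `g` are again of this form,
and `uᵏ e^{-u/2} ≤ 2ᵏ k!` for `u ≥ 0`, so all of them are bounded on `[0, ∞)`. Leibniz' rule bounds
the `I`-th derivative of `φ` by a combination of the terms `|t|ʲ (x²)^{I-j}`, each of which is at
most `N(x,t)^{2I}` because `|t| ≤ N(x,t)²` and `x² ≤ N(x,t)²`.
-/

namespace LaguerreHypergroup

open Polynomial

def dampedPoly (p : ℝ[X]) (u : ℝ) : ℝ := Real.exp (-u / 2) * p.eval u

def dampedDeriv (p : ℝ[X]) : ℝ[X] := derivative p - C (1 / 2) * p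

theorem hasDerivAt_dampedPoly (p : ℝ[X]) (u : ℝ) :
    HasDerivAt (dampedPoly p) (dampedPoly (dampedDeriv p) u) u := by
  have hexp : HasDerivAt (fun u : ℝ => Real.exp (-u / 2)) (Real.exp (-u / 2) * (-1 / 2)) u := by
    simpa using ((hasDerivAt_id u).neg.div_const 2).exp
  refine (hexp.mul (p.hasDerivAt u)).congr_deriv ?_
  simp only [dampedPoly, dampedDeriv, eval_sub, eval_mul, eval_C]
  ring

theorem contDiff_dampedPoly (p : ℝ[X]) : ContDiff ℝ ⊤ (dampedPoly p) := by
  have hp : ContDiff ℝ ⊤ fun u : ℝ => p.eval u := by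
    simpa only [coe_aeval_eq_eval] using p.contDiff_aeval (𝕜 := ℝ) ⊤
  exact (Real.contDiff_exp.comp (contDiff_id.neg.div_const 2)).mul hp

theorem iteratedDeriv_dampedPoly (p : ℝ[X]) (n : ℕ) :
    iteratedDeriv n (dampedPoly p) = dampedPoly (dampedDeriv^[n] p) := by
  induction n with
  | zero => rfl
  | succ n ih =>
    rw [iteratedDeriv_succ, ih, Function.iterate_succ_apply']
    exact funext fun u => (hasDerivAt_dampedPoly _ u).deriv

theorem iteratedDeriv_dampedPoly_comp_mul (p : ℝ[X]) (c : ℝ) (n : ℕ) (l : ℝ) :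
    iteratedDeriv n (fun l => dampedPoly p (c * l)) l
      = c ^ n * dampedPoly (dampedDeriv^[n] p) (c * l) := by
  rw [iteratedDeriv_comp_const_smul ((contDiff_dampedPoly p).of_le le_top),
    iteratedDeriv_dampedPoly]
  rfl

def dampedBound (p : ℝ[X]) : ℝ :=
  ∑ k ∈ Finset.range (p.natDegree + 1), |p.coeff k| * (2 ^ k * k.factorial)

theorem pow_mul_exp_neg_half_le {u : ℝ} (hu : 0 ≤ u) (k : ℕ) :
    u ^ k * Real.exp (-u / 2) ≤ 2 ^ k * k.factorial := by
  have h := Real.pow_div_factorial_le_exp (u / 2) (by positivity) k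
  rw [div_pow, div_div, div_le_iff₀ (by positivity)] at h
  calc u ^ k * Real.exp (-u / 2)
      ≤ Real.exp (u / 2) * (2 ^ k * k.factorial) * Real.exp (-u / 2) := by gcongr
    _ = 2 ^ k * k.factorial := by
      rw [mul_comm, ← mul_assoc, ← Real.exp_add, neg_div, neg_add_cancel, Real.exp_zero, one_mul]

theorem abs_dampedPoly_le (p : ℝ[X]) {u : ℝ} (hu : 0 ≤ u) :
    |dampedPoly p u| ≤ dampedBound p := by
  rw [dampedPoly, eval_eq_sum_range, Finset.mul_sum]
  refine (Finset.abs_sum_le_sum_abs _ _).trans (Finset.sum_le_sum fun k _ => ?_)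
  rw [abs_mul, abs_mul, abs_of_pos (Real.exp_pos _), abs_pow, abs_of_nonneg hu,
    mul_left_comm, ← mul_comm (u ^ k)]
  exact mul_le_mul_of_nonneg_left (pow_mul_exp_neg_half_le hu k) (abs_nonneg _)

theorem norm_iteratedDeriv_cexp_I_mul (t : ℝ) (j : ℕ) (l : ℝ) :
    ‖iteratedDeriv j (fun l : ℝ => Complex.exp (Complex.I * l * t)) l‖ = |t| ^ j := by
  have hderiv : ∀ l : ℝ, iteratedDeriv j (fun l : ℝ => Complex.exp (Complex.I * l * t)) l
      = (Complex.I * t) ^ j * Complex.exp (Complex.I * l * t) := by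
    induction j with
    | zero => simp
    | succ j ih =>
      intro l
      rw [iteratedDeriv_succ, funext ih]
      have hz : HasDerivAt (fun z : ℂ => Complex.exp (Complex.I * z * t))
          (Complex.exp (Complex.I * l * t) * (Complex.I * t)) l := by
        simpa using (((hasDerivAt_id (l : ℂ)).const_mul Complex.I).mul_const (t : ℂ)).cexp
      rw [(hz.comp_ofReal.const_mul _).deriv, pow_succ]
      ring
  rw [hderiv, norm_mul, norm_pow, Complex.norm_exp, mul_right_comm, Complex.re_mul_ofReal]
  simp

theorem norm_iteratedDeriv_dampedPoly_smul_cexp_le (p : ℝ[X]) {c t M l : ℝ} (n : ℕ)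
    (hc : |c| ≤ M) (ht : |t| ≤ M) (hl : 0 ≤ c * l) :
    ‖iteratedDeriv n (fun l : ℝ => dampedPoly p (c * l) • Complex.exp (Complex.I * l * t)) l‖
      ≤ (∑ j ∈ Finset.range (n + 1), (n.choose j : ℝ) * dampedBound (dampedDeriv^[j] p)) * M ^ n := by
  have hf : ContDiff ℝ ⊤ fun l : ℝ => dampedPoly p (c * l) :=
    (contDiff_dampedPoly p).comp (contDiff_const.mul contDiff_id)
  have hg : ContDiff ℝ ⊤ fun l : ℝ => Complex.exp (Complex.I * l * t) :=
    Complex.contDiff_exp.comp ((contDiff_const.mul Complex.ofRealCLM.contDiff).mul contDiff_const)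
  have hM : 0 ≤ M := (abs_nonneg c).trans hc
  rw [← norm_iteratedFDeriv_eq_norm_iteratedDeriv, Finset.sum_mul]
  refine (norm_iteratedFDeriv_smul_le hf hg l (by exact_mod_cast le_top)).trans
    (Finset.sum_le_sum fun j hj => ?_)
  rw [norm_iteratedFDeriv_eq_norm_iteratedDeriv, norm_iteratedFDeriv_eq_norm_iteratedDeriv,
    iteratedDeriv_dampedPoly_comp_mul, norm_iteratedDeriv_cexp_I_mul, Real.norm_eq_abs, abs_mul,
    abs_pow]
  have hjn : j ≤ n := Nat.lt_succ_iff.mp (Finset.mem_range.mp hj)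
  have hbound := abs_dampedPoly_le (dampedDeriv^[j] p) hl
  have hbound_nonneg := (abs_nonneg _).trans hbound
  calc (n.choose j : ℝ) * (|c| ^ j * |dampedPoly (dampedDeriv^[j] p) (c * l)|) * |t| ^ (n - j)
      ≤ (n.choose j : ℝ) * (M ^ j * dampedBound (dampedDeriv^[j] p)) * M ^ (n - j) := by
        gcongr
    _ = (n.choose j : ℝ) * dampedBound (dampedDeriv^[j] p) * M ^ n := by
        rw [mul_comm (M ^ j), mul_assoc, mul_assoc, ← pow_add, Nat.add_sub_cancel' hjn, mul_assoc]

theorem exists_laguerreFun_eq_dampedPoly (α : ℝ) (m : ℕ) :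
    ∃ p : ℝ[X], laguerreFun α m = dampedPoly p := by
  let L : ℝ[X] := ∑ k ∈ Finset.range (m + 1),
    C (Real.Gamma (m + α + 1) / (Real.Gamma (k + α + 1) * (m - k).factorial * k.factorial)) *
      (-X) ^ k
  have hL : ∀ u, L.eval u = laguerreL α m u := fun u => by simp [L, laguerreL, eval_finsetSum]
  refine ⟨C (laguerreL α m 0)⁻¹ * L, funext fun u => ?_⟩
  rw [laguerreFun, dampedPoly, eval_mul, eval_C, hL, div_eq_mul_inv]
  ring

theorem hNorm_sq_sq (x t : ℝ) : (hNorm (x, t) ^ 2) ^ 2 = x ^ 4 + 4 * t ^ 2 := by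
  rw [← pow_mul, hNorm, ← Real.rpow_natCast, ← Real.rpow_mul (by positivity)]
  norm_num

theorem sq_le_hNorm_sq (x t : ℝ) : x ^ 2 ≤ hNorm (x, t) ^ 2 := by
  refine (pow_le_pow_iff_left₀ (sq_nonneg x) (sq_nonneg _) two_ne_zero).mp ?_
  rw [hNorm_sq_sq]
  nlinarith [sq_nonneg t]

theorem abs_le_hNorm_sq (x t : ℝ) : |t| ≤ hNorm (x, t) ^ 2 := by
  refine (pow_le_pow_iff_left₀ (abs_nonneg t) (sq_nonneg _) two_ne_zero).mp ?_
  rw [hNorm_sq_sq, sq_abs]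
  nlinarith [pow_two_nonneg (x ^ 2), sq_nonneg t]

theorem exists_abs_eventuallyEq_mul {lam : ℝ} (h : lam ≠ 0) :
    ∃ s : ℝ, |s| = 1 ∧ ∀ᶠ l in 𝓝 lam, |l| = s * l := by
  rcases h.lt_or_gt with h | h
  · refine ⟨-1, by norm_num, ?_⟩
    filter_upwards [Iio_mem_nhds h] with l hl
    rw [abs_of_neg hl, neg_one_mul]
  · refine ⟨1, by norm_num, ?_⟩
    filter_upwards [Ioi_mem_nhds h] with l hl
    rw [abs_of_pos hl, one_mul]

theorem iteratedDeriv_phi_le_general (α : ℝ) (m : ℕ) (I : ℕ) :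
    ∃ C > (0 : ℝ), ∀ (lam : ℝ), lam ≠ 0 → ∀ (x t : ℝ), 0 ≤ x →
      ‖iteratedDeriv I (fun l : ℝ => phi α l m x t) lam‖ ≤ C * hNorm (x, t) ^ (2 * I) := by
  obtain ⟨p, hp⟩ := exists_laguerreFun_eq_dampedPoly α m
  set B := ∑ j ∈ Finset.range (I + 1), (I.choose j : ℝ) * dampedBound (dampedDeriv^[j] p)
  refine ⟨max B 1, lt_max_of_lt_right one_pos, fun lam hlam x t _ => ?_⟩
  obtain ⟨s, hs, habs⟩ := exists_abs_eventuallyEq_mul hlam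
  have hphi : (fun l => phi α l m x t) =ᶠ[𝓝 lam]
      fun l : ℝ => dampedPoly p (s * x ^ 2 * l) • Complex.exp (Complex.I * l * t) := by
    filter_upwards [habs] with l hl
    rw [phi, hl, hp, Complex.real_smul, mul_comm, mul_right_comm s]
  have hc : |s * x ^ 2| ≤ hNorm (x, t) ^ 2 := by
    rw [abs_mul, hs, one_mul, abs_of_nonneg (sq_nonneg x)]
    exact sq_le_hNorm_sq x t
  have hl : 0 ≤ s * x ^ 2 * lam := by
    rw [mul_right_comm, ← habs.self_of_nhds]
    positivity
  rw [hphi.iteratedDeriv_eq, pow_mul]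
  calc _ ≤ B * (hNorm (x, t) ^ 2) ^ I :=
        norm_iteratedDeriv_dampedPoly_smul_cexp_le p I hc (abs_le_hNorm_sq x t) hl
    _ ≤ max B 1 * (hNorm (x, t) ^ 2) ^ I :=
        mul_le_mul_of_nonneg_right (le_max_left _ _) (by positivity)

/-- `|∂^I/∂λ^I φ^α_{(λ,m)}(x,t)| ≤ C N(x,t)^{2I}` for `λ ≠ 0`. -/
theorem iteratedDeriv_phi_le (α : ℝ) (hα : 0 ≤ α) (m : ℕ) (I : ℕ) :
    ∃ C > (0 : ℝ), ∀ (lam : ℝ), lam ≠ 0 → ∀ (x t : ℝ), 0 ≤ x →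
      ‖iteratedDeriv I (fun l : ℝ => phi α l m x t) lam‖ ≤ C * hNorm (x, t) ^ (2 * I) :=
  iteratedDeriv_phi_le_general α m I

end LaguerreHypergroup
end
end

section
/- Let 0 < p ≤ 1 ≤ q ≤ ∞ with p ≠ q, let s' ≥ s ≥ ⌊Q(1/p − 1)⌋ be integers, and let ε > max{s/Q, 1/p − 1}. Then there is a constant C > 0, depending only on p, q, s, s', ε and α, such that every (p,q,s')-atom a centered at the origin is a (p,q,s,ε)-molecule centered at the origin with molecular norm 𝔑(a) ≤ C. -/
open MeasureTheory Real Set Filter Topology ENNReal NNReal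

noncomputable section

namespace LaguerreHypergroup


/-! On the support `B(e,r)` of an atom the weight `N^{Qb}` is at most `r^{Qb}`, and the
box `(r/4, r/2) × (-r²/4, r²/4) ⊆ B(e,r)` gives `m_α(B(e,r)) ≥ c r^Q`. Hence
`‖a‖_q ≤ (c r^Q)^{1/q - 1/p}` and `‖a N^{Qb}‖_q ≤ r^{Qb} (c r^Q)^{1/q - 1/p}`, so
`𝔑(a) ≤ c^{1/q - 1/p} r^{Q(1/q - 1/p) + Q(b - a)} = c^{1/q - 1/p}` because `b - a = 1/p - 1/q`.
The moments of order `≤ s ≤ s'` vanish by the atom condition, and they are integrable because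
`a ∈ L^q ⊆ L^1` on the ball, which has finite measure. -/

lemma hNorm_nonneg (z : ℝ × ℝ) : 0 ≤ hNorm z :=
  Real.rpow_nonneg (by positivity) _

lemma continuous_hNorm : Continuous hNorm :=
  (by fun_prop : Continuous fun z : ℝ × ℝ => z.1 ^ 4 + 4 * z.2 ^ 2).rpow_const
    fun _ => Or.inr (by norm_num)

lemma measurableSet_hNorm_lt (r : ℝ) : MeasurableSet {z : ℝ × ℝ | hNorm z < r} :=
  measurableSet_lt continuous_hNorm.measurable measurable_const

lemma hNorm_lt_iff {r : ℝ} (hr : 0 ≤ r) (z : ℝ × ℝ) :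
    hNorm z < r ↔ z.1 ^ 4 + 4 * z.2 ^ 2 < r ^ 4 := by
  have hpow : hNorm z ^ (4 : ℕ) = z.1 ^ 4 + 4 * z.2 ^ 2 := by
    rw [hNorm, ← Real.rpow_natCast, ← Real.rpow_mul (by positivity)]
    norm_num
  rw [← hpow, pow_lt_pow_iff_left₀ (hNorm_nonneg z) hr (by norm_num)]

lemma box_subset_hNorm_lt {r : ℝ} (hr : 0 < r) :
    Ioo (r / 4) (r / 2) ×ˢ Ioo (-(r ^ 2 / 4)) (r ^ 2 / 4) ⊆ {z : ℝ × ℝ | hNorm z < r} := by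
  rintro z ⟨hx, ht⟩
  rw [mem_ofPred_eq, hNorm_lt_iff hr.le]
  have hx4 : z.1 ^ 4 < (r / 2) ^ 4 := pow_lt_pow_left₀ hx.2 (by linarith [hx.1]) (by norm_num)
  have ht2 : z.2 ^ 2 < (r ^ 2 / 4) ^ 2 := sq_lt_sq' ht.1 ht.2
  nlinarith [pow_pos hr 4]

lemma hNorm_lt_subset_box {r : ℝ} (hr : 0 < r) :
    {z : ℝ × ℝ | hNorm z < r} ⊆ Ioo (-r) r ×ˢ Ioo (-(r ^ 2 / 2)) (r ^ 2 / 2) := by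
  intro z hz
  rw [mem_ofPred_eq, hNorm_lt_iff hr.le] at hz
  have hx : z.1 ^ 2 < r ^ 2 := by nlinarith [sq_nonneg z.1, sq_nonneg z.2, sq_nonneg r]
  have ht : z.2 ^ 2 < (r ^ 2 / 2) ^ 2 := by nlinarith [sq_nonneg z.1]
  exact ⟨abs_lt.1 (abs_lt_of_sq_lt_sq hx hr.le), abs_lt.1 (abs_lt_of_sq_lt_sq ht (by positivity))⟩

section Measure

variable {α : ℝ}

lemma mAlpha_const_pos (hα : -1 < α) : 0 < (π * Real.Gamma (α + 1))⁻¹ :=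
  inv_pos.2 (mul_pos Real.pi_pos (Real.Gamma_pos_of_pos (by linarith)))

lemma ofReal_mul_volume_le_mAlpha (hα : 0 ≤ 2 * α + 1) {S : Set (ℝ × ℝ)} (hS : MeasurableSet S)
    {u : ℝ} (hu : 0 ≤ u) (huS : ∀ z ∈ S, u ≤ z.1) :
    ENNReal.ofReal ((π * Real.Gamma (α + 1))⁻¹ * u ^ (2 * α + 1)) * volume S ≤ mAlpha α S := by
  rw [mAlpha, withDensity_apply _ hS, ← setLIntegral_const]
  refine setLIntegral_mono' hS fun z hz => ?_
  rw [if_pos (hu.trans (huS z hz))]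
  gcongr
  · exact (mAlpha_const_pos (by linarith)).le
  · exact huS z hz

lemma mAlpha_le_ofReal_mul_volume (hα : 0 ≤ 2 * α + 1) {S : Set (ℝ × ℝ)} (hS : MeasurableSet S)
    {v : ℝ} (hv : 0 ≤ v) (hvS : ∀ z ∈ S, z.1 ≤ v) :
    mAlpha α S ≤ ENNReal.ofReal ((π * Real.Gamma (α + 1))⁻¹ * v ^ (2 * α + 1)) * volume S := by
  rw [mAlpha, withDensity_apply _ hS, ← setLIntegral_const]
  refine setLIntegral_mono' hS fun z hz => ENNReal.ofReal_le_ofReal ?_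
  have hK := (mAlpha_const_pos (α := α) (by linarith)).le
  split_ifs with hx
  · gcongr
    exact hvS z hz
  · rw [mul_zero]
    exact mul_nonneg hK (Real.rpow_nonneg hv _)

lemma mAlpha_hNorm_lt_lt_top (hα : 0 ≤ 2 * α + 1) {r : ℝ} (hr : 0 < r) :
    mAlpha α {z : ℝ × ℝ | hNorm z < r} < ∞ := by
  have hbox : MeasurableSet (Ioo (-r) r ×ˢ Ioo (-(r ^ 2 / 2)) (r ^ 2 / 2)) :=
    measurableSet_Ioo.prod measurableSet_Ioo
  refine ((measure_mono (hNorm_lt_subset_box hr)).trans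
    (mAlpha_le_ofReal_mul_volume hα hbox hr.le fun z hz => hz.1.2.le)).trans_lt ?_
  rw [Measure.volume_eq_prod, Measure.prod_prod, Real.volume_Ioo, Real.volume_Ioo]
  finiteness

lemma exists_ofReal_mul_rpow_le_mAlpha_hNorm_lt (hα : 0 ≤ 2 * α + 1) :
    ∃ c > (0 : ℝ), ∀ r > (0 : ℝ),
      ENNReal.ofReal (c * r ^ Q α) ≤ mAlpha α {z : ℝ × ℝ | hNorm z < r} := by
  have hK := mAlpha_const_pos (α := α) (by linarith)
  refine ⟨(π * Real.Gamma (α + 1))⁻¹ / (4 ^ (2 * α + 1) * 8), by positivity, fun r hr => ?_⟩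
  have hbox : MeasurableSet (Ioo (r / 4) (r / 2) ×ˢ Ioo (-(r ^ 2 / 4)) (r ^ 2 / 4)) :=
    measurableSet_Ioo.prod measurableSet_Ioo
  refine le_trans (le_of_eq ?_) ((ofReal_mul_volume_le_mAlpha hα hbox (by positivity)
    fun z hz => hz.1.1.le).trans (measure_mono (box_subset_hNorm_lt hr)))
  have hQ : r ^ Q α = r ^ (2 * α + 1) * r ^ 3 := by
    rw [← Real.rpow_natCast, ← Real.rpow_add hr, Q]
    ring_nf
  rw [Measure.volume_eq_prod, Measure.prod_prod, Real.volume_Ioo, Real.volume_Ioo,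
    ← ENNReal.ofReal_mul (by linarith), ← ENNReal.ofReal_mul (by positivity),
    Real.div_rpow hr.le (by norm_num), hQ]
  congr 1
  generalize (π * Real.Gamma (α + 1))⁻¹ = K
  field_simp
  ring

end Measure

section Atom

variable {μ : Measure (ℝ × ℝ)} {q : ℝ≥0∞} {r : ℝ}

lemma norm_hNorm_rpow_smul_le {E : Type*} [NormedAddCommGroup E] [NormedSpace ℝ E]
    {f : ℝ × ℝ → E} {e : ℝ} (he : 0 ≤ e) (hf : ∀ z, ¬ hNorm z < r → f z = 0) (z : ℝ × ℝ) :
    ‖hNorm z ^ e • f z‖ ≤ r ^ e * ‖f z‖ := by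
  by_cases hz : hNorm z < r
  · rw [norm_smul, Real.norm_of_nonneg (Real.rpow_nonneg (hNorm_nonneg z) _)]
    gcongr
    exact hNorm_nonneg z
  · simp [hf z hz]

lemma memLp_hNorm_rpow_smul {f : ℝ × ℝ → ℂ} (hf : MemLp f q μ) {e : ℝ} (he : 0 ≤ e)
    (hsupp : ∀ z, ¬ hNorm z < r → f z = 0) :
    MemLp (fun z => hNorm z ^ e • f z) q μ :=
  hf.of_le_mul ((continuous_hNorm.rpow_const fun _ => Or.inr he).aestronglyMeasurable.smul hf.1)
    (.of_forall (norm_hNorm_rpow_smul_le he hsupp))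

lemma toReal_eLpNorm_hNorm_rpow_smul_le {f : ℝ × ℝ → ℂ} (hf : MemLp f q μ) (hr : 0 ≤ r) {e : ℝ}
    (he : 0 ≤ e) (hsupp : ∀ z, ¬ hNorm z < r → f z = 0) :
    (eLpNorm (fun z => hNorm z ^ e • f z) q μ).toReal ≤ r ^ e * (eLpNorm f q μ).toReal := by
  rw [← ENNReal.toReal_ofReal (Real.rpow_nonneg hr e), ← ENNReal.toReal_mul]
  exact ENNReal.toReal_mono (ENNReal.mul_ne_top ENNReal.ofReal_ne_top hf.2.ne)
    (eLpNorm_le_mul_eLpNorm_of_ae_le_mul (μ := μ) (.of_forall (norm_hNorm_rpow_smul_le he hsupp)) q)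

lemma integrable_monomial_mul (hq : 1 ≤ q) {f : ℝ × ℝ → ℂ} (hf : MemLp f q μ) (hr : 0 < r)
    (hμ : μ {z : ℝ × ℝ | hNorm z < r} < ∞) (hsupp : ∀ z, ¬ hNorm z < r → f z = 0) (i j : ℕ) :
    Integrable (fun z : ℝ × ℝ => (z.1 : ℂ) ^ i * (z.2 : ℂ) ^ j * f z) μ := by
  set B := {z : ℝ × ℝ | hNorm z < r}
  have hB := measurableSet_hNorm_lt r
  have : IsFiniteMeasure (μ.restrict B) := isFiniteMeasure_restrict.2 hμ.ne
  rw [← integrableOn_iff_integrable_of_support_subset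
    (Function.support_subset_iff'.2 fun z hz => by rw [hsupp z hz, mul_zero])]
  refine ((hf.restrict B).integrable hq).bdd_mul (c := r ^ i * (r ^ 2 / 2) ^ j)
    (by fun_prop) ?_
  filter_upwards [self_mem_ae_restrict hB] with z hz
  obtain ⟨⟨hx₁, hx₂⟩, ⟨ht₁, ht₂⟩⟩ := hNorm_lt_subset_box hr hz
  simp only [norm_mul, norm_pow, Complex.norm_real, Real.norm_eq_abs]
  gcongr
  exacts [abs_lt.2 ⟨hx₁, hx₂⟩ |>.le, abs_lt.2 ⟨ht₁, ht₂⟩ |>.le]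

end Atom

lemma toReal_le_rpow_of_le_rpow {x m : ℝ≥0∞} {y κ : ℝ} (hy : 0 < y) (hκ : κ ≤ 0)
    (hym : ENNReal.ofReal y ≤ m) (hx : x ≤ m ^ κ) : x.toReal ≤ y ^ κ := by
  refine ENNReal.toReal_le_of_le_ofReal (Real.rpow_nonneg hy.le _) (hx.trans ?_)
  have := ENNReal.inv_le_inv.2 (ENNReal.rpow_le_rpow hym (neg_nonneg.2 hκ))
  rwa [← ENNReal.rpow_neg, ← ENNReal.rpow_neg, neg_neg, ENNReal.ofReal_rpow_of_pos hy] at this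

lemma one_div_toReal_lt_one_div {p : ℝ} {q : ℝ≥0∞} (hp : 0 < p) (hp1 : p ≤ 1) (hq : 1 ≤ q)
    (hpq : ENNReal.ofReal p ≠ q) : 1 / q.toReal < 1 / p := by
  rcases eq_or_ne q ∞ with rfl | hq_top
  · simpa using hp
  have hq1 : 1 ≤ q.toReal := by simpa using ENNReal.toReal_mono hq_top hq
  refine lt_of_le_of_ne ?_ fun h => hpq ?_
  · calc 1 / q.toReal ≤ 1 := by rw [div_le_one (by linarith)]; exact hq1
      _ ≤ 1 / p := by rw [le_div_iff₀ hp]; linarith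
  · rw [← ENNReal.ofReal_toReal hq_top, (by simpa using h : q.toReal = p)]

lemma molB_sub_molA (p ε : ℝ) (q : ℝ≥0∞) : molB q ε - molA p ε = 1 / p - 1 / q.toReal := by
  unfold molA molB
  ring

lemma molNorm_le_of_le {α p ε : ℝ} {q : ℝ≥0∞} {M : ℝ × ℝ → ℂ} (ha : 0 ≤ molA p ε)
    (hab : molA p ε < molB q ε) {A r : ℝ} (hA : 0 ≤ A) (hr : 0 ≤ r)
    (hM : (eLpNorm M q (mAlpha α)).toReal ≤ A)
    (hNM : (eLpNorm (fun z => (hNorm z ^ (Q α * molB q ε) : ℝ) • M z) q (mAlpha α)).toReal ≤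
      r ^ (Q α * molB q ε) * A) :
    molNorm α p q ε M ≤ A * r ^ (Q α * (molB q ε - molA p ε)) := by
  have hb : 0 < molB q ε := ha.trans_lt hab
  have hθ : molA p ε / molB q ε ≤ 1 := (div_le_one hb).2 hab.le
  calc molNorm α p q ε M
      ≤ A ^ (molA p ε / molB q ε) * (r ^ (Q α * molB q ε) * A) ^ (1 - molA p ε / molB q ε) := by
        unfold molNorm
        gcongr
    _ = A ^ (molA p ε / molB q ε + (1 - molA p ε / molB q ε)) *
          r ^ (Q α * molB q ε * (1 - molA p ε / molB q ε)) := by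
        rw [Real.mul_rpow (by positivity) hA, Real.rpow_add' hA (by norm_num),
          ← Real.rpow_mul hr]
        ring
    _ = A * r ^ (Q α * (molB q ε - molA p ε)) := by
        congr 2
        · rw [add_sub_cancel, Real.rpow_one]
        · field_simp

theorem atom_isMolecule_general (α p : ℝ) (q : ℝ≥0∞) (hα : 0 ≤ α) (hp : 0 < p) (hp1 : p ≤ 1)
    (hq : 1 ≤ q) (hpq : ENNReal.ofReal p ≠ q) (s s' : ℕ)
    (hss' : s ≤ s') (ε : ℝ)
    (hε : max ((s : ℝ) / Q α) (1 / p - 1) < ε) :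
    ∃ C > (0 : ℝ), ∀ a : ℝ × ℝ → ℂ, IsAtom α p q s' a →
      IsMolecule α p q s ε a ∧ molNorm α p q ε a ≤ C := by
  set κ := 1 / q.toReal - 1 / p
  have hκ : κ < 0 := sub_neg.2 (one_div_toReal_lt_one_div hp hp1 hq hpq)
  have ha : 0 < molA p ε := by unfold molA; linarith [le_max_right ((s : ℝ) / Q α) (1 / p - 1)]
  have hab : molA p ε < molB q ε := by linarith [molB_sub_molA p ε q]
  have hα' : 0 ≤ 2 * α + 1 := by linarith
  have hE : 0 ≤ Q α * molB q ε := mul_nonneg (by unfold Q; linarith) (ha.trans hab).le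
  obtain ⟨c, hc, hball⟩ := exists_ofReal_mul_rpow_le_mAlpha_hNorm_lt hα'
  refine ⟨c ^ κ, by positivity, fun a ⟨hmem, r, hr, hsupp, hbound, hmom⟩ => ?_⟩
  have hX : (eLpNorm a q (mAlpha α)).toReal ≤ (c * r ^ Q α) ^ κ :=
    toReal_le_rpow_of_le_rpow (by positivity) hκ.le (hball r hr) hbound
  have hY := toReal_eLpNorm_hNorm_rpow_smul_le hmem hr.le hE hsupp
  refine ⟨⟨hmem, memLp_hNorm_rpow_smul hmem hE hsupp, fun i j hij =>
    ⟨integrable_monomial_mul hq hmem hr (mAlpha_hNorm_lt_lt_top hα' hr) hsupp i j,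
      hmom i j (hij.trans hss')⟩⟩, ?_⟩
  calc molNorm α p q ε a
      ≤ (c * r ^ Q α) ^ κ * r ^ (Q α * (molB q ε - molA p ε)) :=
        molNorm_le_of_le ha.le hab (by positivity) hr.le hX (hY.trans (by gcongr))
    _ = c ^ κ * (r ^ (Q α * κ) * r ^ (-(Q α * κ))) := by
        rw [show Q α * (molB q ε - molA p ε) = -(Q α * κ) by rw [molB_sub_molA]; ring,
          Real.mul_rpow hc.le (by positivity), ← Real.rpow_mul hr.le]
        ring
    _ = c ^ κ := by rw [← Real.rpow_add hr, add_neg_cancel, Real.rpow_zero, mul_one]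

/-- every `(p,q,s')`-atom is a `(p,q,s,ε)`-molecule with `𝔑(a) ≤ C`. -/
theorem atom_isMolecule (α p : ℝ) (q : ℝ≥0∞) (hα : 0 ≤ α) (hp : 0 < p) (hp1 : p ≤ 1)
    (hq : 1 ≤ q) (hpq : ENNReal.ofReal p ≠ q) (s s' : ℕ)
    (hs : ⌊Q α * (1 / p - 1)⌋ ≤ (s : ℤ)) (hss' : s ≤ s') (ε : ℝ)
    (hε : max ((s : ℝ) / Q α) (1 / p - 1) < ε) :
    ∃ C > (0 : ℝ), ∀ a : ℝ × ℝ → ℂ, IsAtom α p q s' a →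
      IsMolecule α p q s ε a ∧ molNorm α p q ε a ≤ C :=
  atom_isMolecule_general α p q hα hp hp1 hq hpq s s' hss' ε hε

end LaguerreHypergroup
end
end

section
/- There exists a constant C > 0, depending only on α, such that for every R > 0: γ_α({(λ,m) ∈ K̂ : N(λ,m) < R}) ≤ C · R^{Q/2}. -/
open MeasureTheory Real Set Filter Topology ENNReal NNReal

noncomputable section

/-! The slice `m` of the ball `{N < R}` is the interval `|λ| < R / (4m + 2α + 2)`, of
`|λ|^{α+1} dλ`-mass at most `2 (R / (m + 1))^{α+2}`. Since
`L_m^α(0) = ∏_{k=1}^m (1 + α/k) ≤ exp (α H_m) ≤ e^α (m + 1)^α` by `H_m ≤ 1 + log m`,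
the `m`-th term of `γ_α({N < R})` is at most `2 e^α R^{α+2} / (m + 1)^2`, a convergent
series. -/

lemma setLIntegral_ball_abs_rpow_le {c r β : ℝ} (hc : 0 ≤ c) (hr : 0 ≤ r) (hβ : 0 ≤ β) :
    ∫⁻ x in Metric.ball (0 : ℝ) r, ENNReal.ofReal (c * |x| ^ β) ≤
      ENNReal.ofReal (2 * c * r ^ (β + 1)) := by
  calc ∫⁻ x in Metric.ball (0 : ℝ) r, ENNReal.ofReal (c * |x| ^ β)
      ≤ ∫⁻ _ in Metric.ball (0 : ℝ) r, ENNReal.ofReal (c * r ^ β) :=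
        setLIntegral_mono measurable_const fun x hx => ENNReal.ofReal_le_ofReal <|
          mul_le_mul_of_nonneg_left
            (Real.rpow_le_rpow (abs_nonneg x) (mem_ball_zero_iff.mp hx).le hβ) hc
    _ = ENNReal.ofReal (c * r ^ β) * ENNReal.ofReal (2 * r) := by
        rw [setLIntegral_const, Real.volume_ball]
    _ = ENNReal.ofReal (2 * c * r ^ (β + 1)) := by
        rw [← ENNReal.ofReal_mul (by positivity), Real.rpow_add_one' hr (by linarith)]
        ring_nf

namespace LaguerreHypergroup

lemma laguerreL_zero_eq (α : ℝ) (m : ℕ) :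
    laguerreL α m 0 = Real.Gamma (m + α + 1) / (Real.Gamma (α + 1) * m.factorial) := by
  rw [laguerreL, Finset.sum_eq_single 0 (fun k _ hk => by simp [zero_pow hk]) (by simp)]
  simp

lemma laguerreL_zero_succ {α : ℝ} (hα : -1 < α) (m : ℕ) :
    laguerreL α (m + 1) 0 = laguerreL α m 0 * (1 + α / (m + 1)) := by
  have hΓ : Real.Gamma ((m : ℝ) + 1 + α + 1) = (m + α + 1) * Real.Gamma (m + α + 1) := by
    rw [show (m : ℝ) + 1 + α + 1 = (m + α + 1) + 1 by ring,
      Real.Gamma_add_one (by linarith [m.cast_nonneg' (α := ℝ)])]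
  rw [laguerreL_zero_eq, laguerreL_zero_eq, Nat.factorial_succ]
  push_cast
  rw [hΓ]
  field_simp
  ring

lemma laguerreL_zero_eq_prod {α : ℝ} (hα : -1 < α) (m : ℕ) :
    laguerreL α m 0 = ∏ k ∈ Finset.range m, (1 + α / (k + 1)) := by
  induction m with
  | zero => simp [laguerreL_zero_eq, (Real.Gamma_pos_of_pos (by linarith : 0 < α + 1)).ne']
  | succ m ih => rw [laguerreL_zero_succ hα, ih, Finset.prod_range_succ]

lemma laguerreL_zero_le_exp_harmonic {α : ℝ} (hα : 0 ≤ α) (m : ℕ) :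
    laguerreL α m 0 ≤ Real.exp (α * harmonic m) := by
  rw [laguerreL_zero_eq_prod (by linarith), harmonic, Rat.cast_sum, Finset.mul_sum,
    Real.exp_sum]
  refine Finset.prod_le_prod (fun k _ => by positivity) fun k _ => ?_
  simpa [div_eq_mul_inv, add_comm] using Real.add_one_le_exp (α / (k + 1))

lemma laguerreL_zero_le {α : ℝ} (hα : 0 ≤ α) (m : ℕ) :
    laguerreL α m 0 ≤ Real.exp α * ((m : ℝ) + 1) ^ α := by
  have hlog : Real.log m ≤ Real.log (m + 1) := by
    rcases Nat.eq_zero_or_pos m with rfl | hm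
    · simp
    · exact Real.log_le_log (by positivity) (by linarith)
  calc laguerreL α m 0 ≤ Real.exp (α * harmonic m) := laguerreL_zero_le_exp_harmonic hα m
    _ ≤ Real.exp (α * (1 + Real.log (m + 1))) := by
      gcongr
      exact (harmonic_le_one_add_log m).trans (by linarith)
    _ = Real.exp α * ((m : ℝ) + 1) ^ α := by
      rw [Real.rpow_def_of_pos (by positivity), mul_add, mul_one, Real.exp_add, mul_comm α]

lemma measurableSet_dualN_lt (α R : ℝ) :
    MeasurableSet {lm : ℝ × ℕ | dualN α lm.1 lm.2 < R} :=
  measurableSet_lt (by unfold dualN; fun_prop) measurable_const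

lemma gammaM_apply (α : ℝ) {s : Set (ℝ × ℕ)} (hs : MeasurableSet s) :
    gammaM α s = ∑' m : ℕ, ∫⁻ lam in (fun lam => (lam, m)) ⁻¹' s,
      ENNReal.ofReal (laguerreL α m 0 * |lam| ^ (α + 1)) := by
  simp only [gammaM, Measure.sum_apply _ hs]
  congr 1 with m
  rw [Measure.map_apply measurable_prodMk_right hs,
    withDensity_apply _ (measurable_prodMk_right hs)]

lemma preimage_dualN_lt {α : ℝ} (hα : -1 < α) (m : ℕ) (R : ℝ) :
    (fun lam => (lam, m)) ⁻¹' {lm : ℝ × ℕ | dualN α lm.1 lm.2 < R} =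
      Metric.ball 0 (R / (4 * (m + (α + 1) / 2))) := by
  ext lam
  have : (0 : ℝ) < 4 * (m + (α + 1) / 2) := by linarith [m.cast_nonneg' (α := ℝ)]
  rw [mem_preimage, mem_ball_zero_iff, Real.norm_eq_abs, lt_div_iff₀ this]
  exact iff_of_eq (congrArg (· < R) (by unfold dualN; ring))

lemma gammaM_slice_le {α R : ℝ} (hα : 0 ≤ α) (hR : 0 ≤ R) (m : ℕ) :
    ∫⁻ lam in (fun lam => (lam, m)) ⁻¹' {lm : ℝ × ℕ | dualN α lm.1 lm.2 < R},
        ENNReal.ofReal (laguerreL α m 0 * |lam| ^ (α + 1)) ≤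
      ENNReal.ofReal (2 * Real.exp α * R ^ (α + 2) / ((m : ℝ) + 1) ^ 2) := by
  rw [preimage_dualN_lt (by linarith) m R]
  set r := R / (4 * (m + (α + 1) / 2))
  have hm : (0 : ℝ) < m + 1 := by positivity
  have hr : r ≤ R / (m + 1) := div_le_div_of_nonneg_left hR hm (by linarith)
  calc ∫⁻ lam in Metric.ball 0 r, ENNReal.ofReal (laguerreL α m 0 * |lam| ^ (α + 1))
      ≤ ∫⁻ lam in Metric.ball 0 r,
          ENNReal.ofReal (Real.exp α * ((m : ℝ) + 1) ^ α * |lam| ^ (α + 1)) :=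
        lintegral_mono fun lam => ENNReal.ofReal_le_ofReal <|
          mul_le_mul_of_nonneg_right (laguerreL_zero_le hα m) (by positivity)
    _ ≤ ENNReal.ofReal (2 * (Real.exp α * ((m : ℝ) + 1) ^ α) * r ^ (α + 2)) := by
        simpa only [add_assoc, one_add_one_eq_two] using
          setLIntegral_ball_abs_rpow_le (β := α + 1) (by positivity) (by positivity) (by linarith)
    _ ≤ ENNReal.ofReal (2 * (Real.exp α * ((m : ℝ) + 1) ^ α) * (R / (m + 1)) ^ (α + 2)) := by
        gcongr
    _ = ENNReal.ofReal (2 * Real.exp α * R ^ (α + 2) / ((m : ℝ) + 1) ^ 2) := by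
        rw [Real.div_rpow hR hm.le, Real.rpow_add hm, Real.rpow_two]
        field_simp

/-- `γ_α({N(λ,m) < R}) ≤ C R^{Q/2}`. -/
theorem gammaM_ball_le (α : ℝ) (hα : 0 ≤ α) :
    ∃ C > (0 : ℝ), ∀ R : ℝ, 0 < R →
      gammaM α {lm : ℝ × ℕ | dualN α lm.1 lm.2 < R} ≤
        ENNReal.ofReal (C * R ^ (Q α / 2)) := by
  have hsum : Summable fun m : ℕ => 1 / ((m : ℝ) + 1) ^ 2 := by
    simpa [abs_of_nonneg, add_nonneg] using
      (Real.summable_one_div_nat_add_rpow 1 2).mpr one_lt_two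
  set S := ∑' m : ℕ, 1 / ((m : ℝ) + 1) ^ 2
  have hS : 0 < S := hsum.tsum_pos (fun _ => by positivity) 0 (by norm_num)
  refine ⟨2 * Real.exp α * S, by positivity, fun R hR => ?_⟩
  rw [gammaM_apply α (measurableSet_dualN_lt α R), show Q α / 2 = α + 2 by unfold Q; ring]
  calc _ ≤ ∑' m : ℕ,
          ENNReal.ofReal (2 * Real.exp α * R ^ (α + 2) * (1 / ((m : ℝ) + 1) ^ 2)) := by
        refine ENNReal.tsum_le_tsum fun m => ?_
        simpa only [mul_one_div] using gammaM_slice_le hα hR.le m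
    _ = ENNReal.ofReal (2 * Real.exp α * S * R ^ (α + 2)) := by
        rw [← ENNReal.ofReal_tsum_of_nonneg (fun _ => by positivity) (hsum.mul_left _),
          _root_.tsum_mul_left, mul_right_comm]

end LaguerreHypergroup
end
end
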